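/- arXiv:2412.20237 — 2 statements merged into one kernel-verified Lean document; each statement's English description precedes it below -/
import Mathlib

section
/- Let P̄ be an n×n real positive semidefinite matrix, V an n×m real matrix, f̄ ∈ ℝ^m, and ξ̂_1,…,ξ̂_N ∈ ℝ^n, and let S = {ξ ∈ ℝ^n : (ξ+Vf̄)ᵀ P̄ (ξ+Vf̄) ≤ 1}. Fix η > 0 and β ∈ (0,1). Then the relaxed distributionally robust chance constraint 'sup over Borel probability measures μ on ℝ^n with finite first moment of [μ(S) − (1/η)·d_W(μ, P̂_N)] ≤ 1 − β' holds if and only if (1/N)·∑_{i=1}^N max(η − infDist(ξ̂_i, S), 0) ≤ (1 − β)·η. -/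
open Matrix MeasureTheory Metric
open scoped ENNReal

/-! The function `y ↦ max (η - infDist y S) 0` is the `c`-transform of `η • 1_S` for the cost
`‖x - y‖`: it dominates `η • 1_S x - ‖x - y‖` for every `x`, with equality at a nearest point of
`S` to `y` when `infDist y S < η` and at `x = y` otherwise. Integrating the domination against any
coupling of `μ` with `P̂_N` bounds `η μ(S) - d_W(μ, P̂_N)` by the `P̂_N`-mean of the transform, and
moving each atom `ξ̂ᵢ` to its maximiser gives an empirical measure attaining the bound. Hence the
supremum is a maximum, equal to `(1/N) ∑ᵢ max (η - infDist ξ̂ᵢ S) 0 / η`. -/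

/-- View a point of `ℝ^n` (with Euclidean norm) as a plain vector `Fin n → ℝ`. -/
def toVec {n : ℕ} (ξ : EuclideanSpace ℝ (Fin n)) : Fin n → ℝ := ξ

/-- The empirical distribution `P̂_N = (1/N) ∑ δ_{ξ̂ᵢ}` on `ℝ^n`. -/
noncomputable def empirical {n N : ℕ} (ξhat : Fin N → EuclideanSpace ℝ (Fin n)) :
    Measure (EuclideanSpace ℝ (Fin n)) :=
  (N : ℝ≥0∞)⁻¹ • ∑ i : Fin N, Measure.dirac (ξhat i)

/-- Type-1 Wasserstein distance: infimum over couplings of the expected distance. -/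
noncomputable def wassersteinDist {n : ℕ} (μ ν : Measure (EuclideanSpace ℝ (Fin n))) : ℝ :=
  sInf { c : ℝ | ∃ Q : Measure (EuclideanSpace ℝ (Fin n) × EuclideanSpace ℝ (Fin n)),
    IsProbabilityMeasure Q ∧ Q.map Prod.fst = μ ∧ Q.map Prod.snd = ν ∧
    Integrable (fun p => ‖p.1 - p.2‖) Q ∧ c = ∫ p, ‖p.1 - p.2‖ ∂Q }

section UniformDiracSum

variable {α : Type*} [MeasurableSpace α] {N : ℕ}

lemma isProbabilityMeasure_inv_smul_sum_dirac (hN : 0 < N) (a : Fin N → α) :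
    IsProbabilityMeasure ((N : ℝ≥0∞)⁻¹ • ∑ i, Measure.dirac (a i)) := by
  constructor
  simp [ENNReal.inv_mul_cancel (Nat.cast_ne_zero.2 hN.ne')]

lemma map_inv_smul_sum_dirac {β : Type*} [MeasurableSpace β] (a : Fin N → α) {g : α → β}
    (hg : Measurable g) :
    ((N : ℝ≥0∞)⁻¹ • ∑ i, Measure.dirac (a i)).map g
      = (N : ℝ≥0∞)⁻¹ • ∑ i, Measure.dirac (g (a i)) := by
  simp [Measure.map_smul, Measure.map_finset_sum hg.aemeasurable, Measure.map_dirac' hg]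

variable [MeasurableSingletonClass α]

lemma integrable_inv_smul_sum_dirac (hN : 0 < N) (a : Fin N → α) (f : α → ℝ) :
    Integrable f ((N : ℝ≥0∞)⁻¹ • ∑ i, Measure.dirac (a i)) :=
  (integrable_finsetSum_measure.2 fun _ _ => integrable_dirac enorm_lt_top).smul_measure
    (ENNReal.inv_ne_top.2 (Nat.cast_ne_zero.2 hN.ne'))

lemma integral_inv_smul_sum_dirac (a : Fin N → α) (f : α → ℝ) :
    ∫ x, f x ∂((N : ℝ≥0∞)⁻¹ • ∑ i, Measure.dirac (a i)) = (N : ℝ)⁻¹ * ∑ i, f (a i) := by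
  rw [integral_smul_measure, integral_finsetSum_measure fun _ _ => integrable_dirac enorm_lt_top]
  simp [integral_dirac]

lemma measureReal_inv_smul_sum_dirac (a : Fin N → α) {S : Set α} (hS : MeasurableSet S) :
    ((N : ℝ≥0∞)⁻¹ • ∑ i, Measure.dirac (a i)).real S = (N : ℝ)⁻¹ * ∑ i, S.indicator 1 (a i) := by
  rw [← integral_indicator_one hS, integral_inv_smul_sum_dirac]

end UniformDiracSum

section TruncatedInfDist

variable {α : Type*} [PseudoMetricSpace α]

lemma mul_indicator_sub_dist_le (S : Set α) (η : ℝ) (x y : α) :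
    η * S.indicator 1 x - dist x y ≤ max (η - infDist y S) 0 := by
  by_cases hx : x ∈ S
  · have : infDist y S ≤ dist x y := dist_comm x y ▸ infDist_le_dist_of_mem hx
    simp only [Set.indicator_of_mem hx, Pi.one_apply, mul_one]
    exact (sub_le_sub_left this η).trans (le_max_left _ _)
  · simp only [Set.indicator_of_notMem hx, mul_zero, zero_sub]
    exact (neg_nonpos.2 dist_nonneg).trans (le_max_right _ _)

lemma exists_max_sub_infDist_le_mul_indicator_sub_dist [ProperSpace α] {S : Set α}
    (hS : IsClosed S) (hne : S.Nonempty) {η : ℝ} (hη : 0 ≤ η) (y : α) :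
    ∃ x, max (η - infDist y S) 0 ≤ η * S.indicator 1 x - dist x y := by
  by_cases hy : infDist y S < η
  · obtain ⟨x, hxS, hxy⟩ := hS.exists_infDist_eq_dist hne y
    refine ⟨x, ?_⟩
    rw [max_eq_left (sub_nonneg.2 hy.le), Set.indicator_of_mem hxS, Pi.one_apply, mul_one,
      hxy, dist_comm]
  · refine ⟨y, ?_⟩
    rw [max_eq_right (sub_nonpos.2 (not_lt.1 hy)), dist_self, sub_zero]
    exact mul_nonneg hη (Set.indicator_nonneg (fun _ _ => zero_le_one) y)

lemma abs_max_sub_infDist_le (S : Set α) (η : ℝ) (y : α) :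
    |max (η - infDist y S) 0| ≤ |η| := by
  rw [abs_of_nonneg (le_max_right _ _)]
  exact max_le (by linarith [le_abs_self η, infDist_nonneg (x := y) (s := S)]) (abs_nonneg η)

end TruncatedInfDist

section Transport

variable {E : Type*} [NormedAddCommGroup E] [MeasurableSpace E] [OpensMeasurableSpace E]

lemma mul_measureReal_le_integral_add_integral_norm_sub {S : Set E} (hS : MeasurableSet S)
    (η : ℝ) (Q : Measure (E × E)) [IsProbabilityMeasure Q]
    (hQ : Integrable (fun p => ‖p.1 - p.2‖) Q) :
    η * (Q.map Prod.fst).real S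
      ≤ ∫ y, max (η - infDist y S) 0 ∂(Q.map Prod.snd) + ∫ p, ‖p.1 - p.2‖ ∂Q := by
  set h : E → ℝ := fun y => max (η - infDist y S) 0
  have h_meas : Measurable h :=
    ((continuous_const.sub (continuous_infDist_pt S)).max continuous_const).measurable
  have h_int : Integrable h (Q.map Prod.snd) :=
    (integrable_const |η|).mono' h_meas.aestronglyMeasurable
      (.of_forall fun y => abs_max_sub_infDist_le S η y)
  have ind_int : Integrable (fun x => η * S.indicator 1 x) (Q.map Prod.fst) :=
    ((integrable_const 1).indicator hS).const_mul η
  have h_snd_int : Integrable (fun p => h p.2) Q := h_int.comp_measurable measurable_snd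
  rw [← integral_indicator_one hS, ← integral_const_mul,
    integral_map measurable_fst.aemeasurable ind_int.aestronglyMeasurable,
    integral_map measurable_snd.aemeasurable h_int.aestronglyMeasurable,
    ← integral_add h_snd_int hQ]
  refine integral_mono (ind_int.comp_measurable measurable_fst) (h_snd_int.add hQ) fun p => ?_
  have := mul_indicator_sub_dist_le S η p.1 p.2
  rw [dist_eq_norm] at this
  linarith

end Transport

section Wasserstein

variable {n : ℕ} {μ ν : Measure (EuclideanSpace ℝ (Fin n))}

lemma wassersteinDist_le_integral
    (Q : Measure (EuclideanSpace ℝ (Fin n) × EuclideanSpace ℝ (Fin n))) [IsProbabilityMeasure Q]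
    (hfst : Q.map Prod.fst = μ) (hsnd : Q.map Prod.snd = ν)
    (hQ : Integrable (fun p => ‖p.1 - p.2‖) Q) :
    wassersteinDist μ ν ≤ ∫ p, ‖p.1 - p.2‖ ∂Q :=
  csInf_le ⟨0, by rintro _ ⟨Q, -, -, -, -, rfl⟩; exact integral_nonneg fun _ => norm_nonneg _⟩
    ⟨Q, ‹_›, hfst, hsnd, hQ, rfl⟩

lemma le_wassersteinDist [IsProbabilityMeasure μ] [IsProbabilityMeasure ν]
    (hμ : Integrable (fun ξ => ‖ξ‖) μ) (hν : Integrable (fun ξ => ‖ξ‖) ν) {c : ℝ}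
    (h : ∀ Q : Measure (EuclideanSpace ℝ (Fin n) × EuclideanSpace ℝ (Fin n)),
      IsProbabilityMeasure Q → Q.map Prod.fst = μ → Q.map Prod.snd = ν →
      Integrable (fun p => ‖p.1 - p.2‖) Q → c ≤ ∫ p, ‖p.1 - p.2‖ ∂Q) :
    c ≤ wassersteinDist μ ν := by
  have h_prod : Integrable (fun p => ‖p.1 - p.2‖) (μ.prod ν) :=
    ((hμ.comp_fst ν).add (hν.comp_snd μ)).mono'
      (continuous_fst.sub continuous_snd).norm.aestronglyMeasurable
      (.of_forall fun p => (norm_norm _).trans_le (norm_sub_le _ _))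
  refine le_csInf ⟨_, μ.prod ν, inferInstance, by simp, by simp, h_prod, rfl⟩ ?_
  rintro _ ⟨Q, hQ, hfst, hsnd, hint, rfl⟩
  exact h Q hQ hfst hsnd hint

lemma wassersteinDist_empirical_le {N : ℕ} (hN : 0 < N)
    (ζ ξ : Fin N → EuclideanSpace ℝ (Fin n)) :
    wassersteinDist (empirical ζ) (empirical ξ) ≤ (N : ℝ)⁻¹ * ∑ i, ‖ζ i - ξ i‖ := by
  have := isProbabilityMeasure_inv_smul_sum_dirac hN fun i => (ζ i, ξ i)
  calc wassersteinDist (empirical ζ) (empirical ξ)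
      ≤ ∫ p, ‖p.1 - p.2‖ ∂((N : ℝ≥0∞)⁻¹ • ∑ i, Measure.dirac (ζ i, ξ i)) :=
        wassersteinDist_le_integral _ (map_inv_smul_sum_dirac _ measurable_fst)
          (map_inv_smul_sum_dirac _ measurable_snd) (integrable_inv_smul_sum_dirac hN _ _)
    _ = (N : ℝ)⁻¹ * ∑ i, ‖ζ i - ξ i‖ := integral_inv_smul_sum_dirac _ _

end Wasserstein

section RelaxedChanceConstraint

variable {n : ℕ}

lemma isClosed_setOf_dotProduct_mulVec_le (P : Matrix (Fin n) (Fin n) ℝ) (c : Fin n → ℝ)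
    (t : ℝ) :
    IsClosed {ξ : EuclideanSpace ℝ (Fin n) | (toVec ξ + c) ⬝ᵥ P.mulVec (toVec ξ + c) ≤ t} :=
  have hv : Continuous fun ξ : EuclideanSpace ℝ (Fin n) => toVec ξ + c :=
    (PiLp.continuous_ofLp 2 _).add continuous_const
  isClosed_le (hv.dotProduct (continuous_const.matrix_mulVec hv)) continuous_const

lemma nonempty_setOf_dotProduct_mulVec_le (P : Matrix (Fin n) (Fin n) ℝ) (c : Fin n → ℝ)
    {t : ℝ} (ht : 0 ≤ t) :
    {ξ : EuclideanSpace ℝ (Fin n) | (toVec ξ + c) ⬝ᵥ P.mulVec (toVec ξ + c) ≤ t}.Nonempty :=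
  ⟨WithLp.toLp 2 (-c), by simp [toVec, ht]⟩

variable {μ ν : Measure (EuclideanSpace ℝ (Fin n))} {S : Set (EuclideanSpace ℝ (Fin n))} {η : ℝ}

lemma measureReal_sub_wassersteinDist_le [IsProbabilityMeasure μ] [IsProbabilityMeasure ν]
    (hμ : Integrable (fun ξ => ‖ξ‖) μ) (hν : Integrable (fun ξ => ‖ξ‖) ν) (hS : MeasurableSet S)
    (hη : 0 < η) :
    μ.real S - (1 / η) * wassersteinDist μ ν ≤ (∫ y, max (η - infDist y S) 0 ∂ν) / η := by
  have key : η * μ.real S - ∫ y, max (η - infDist y S) 0 ∂ν ≤ wassersteinDist μ ν :=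
    le_wassersteinDist hμ hν fun Q _ hfst hsnd hQ => by
      subst hfst hsnd
      linarith [mul_measureReal_le_integral_add_integral_norm_sub hS η Q hQ]
  rw [le_div_iff₀ hη]
  have : (μ.real S - 1 / η * wassersteinDist μ ν) * η = η * μ.real S - wassersteinDist μ ν := by
    field_simp
  linarith

lemma exists_le_mul_measureReal_sub_wassersteinDist_empirical {N : ℕ} (hN : 0 < N)
    (ξ : Fin N → EuclideanSpace ℝ (Fin n)) (hS : IsClosed S) (hne : S.Nonempty) (hη : 0 ≤ η) :
    ∃ ζ : Fin N → EuclideanSpace ℝ (Fin n), (N : ℝ)⁻¹ * ∑ i, max (η - infDist (ξ i) S) 0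
      ≤ η * (empirical ζ).real S - wassersteinDist (empirical ζ) (empirical ξ) := by
  choose ζ hζ using fun i => exists_max_sub_infDist_le_mul_indicator_sub_dist hS hne hη (ξ i)
  refine ⟨ζ, ?_⟩
  calc (N : ℝ)⁻¹ * ∑ i, max (η - infDist (ξ i) S) 0
      ≤ (N : ℝ)⁻¹ * ∑ i, (η * S.indicator 1 (ζ i) - ‖ζ i - ξ i‖) := by
        gcongr with i
        simpa only [dist_eq_norm] using hζ i
    _ = η * (empirical ζ).real S - (N : ℝ)⁻¹ * ∑ i, ‖ζ i - ξ i‖ := by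
        rw [empirical, measureReal_inv_smul_sum_dirac _ hS.measurableSet, Finset.sum_sub_distrib,
          ← Finset.mul_sum]
        ring
    _ ≤ _ := by linarith [wassersteinDist_empirical_le hN ζ ξ]

theorem isGreatest_measureReal_sub_wassersteinDist_empirical {N : ℕ} (hN : 0 < N)
    (ξ : Fin N → EuclideanSpace ℝ (Fin n)) (hS : IsClosed S) (hne : S.Nonempty) (hη : 0 < η) :
    IsGreatest {r : ℝ | ∃ μ : Measure (EuclideanSpace ℝ (Fin n)),
        IsProbabilityMeasure μ ∧ Integrable (fun ξ => ‖ξ‖) μ ∧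
        r = (μ S).toReal - (1 / η) * wassersteinDist μ (empirical ξ)}
      (((1 / N : ℝ) * ∑ i, max (η - infDist (ξ i) S) 0) / η) := by
  have : IsProbabilityMeasure (empirical ξ) := isProbabilityMeasure_inv_smul_sum_dirac hN ξ
  have hub : ∀ μ : Measure (EuclideanSpace ℝ (Fin n)), IsProbabilityMeasure μ →
      Integrable (fun ξ => ‖ξ‖) μ → μ.real S - (1 / η) * wassersteinDist μ (empirical ξ)
        ≤ ((1 / N : ℝ) * ∑ i, max (η - infDist (ξ i) S) 0) / η := fun μ _ hμ => by
    calc μ.real S - (1 / η) * wassersteinDist μ (empirical ξ)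
        ≤ (∫ y, max (η - infDist y S) 0 ∂(empirical ξ)) / η :=
          measureReal_sub_wassersteinDist_le hμ (integrable_inv_smul_sum_dirac hN ξ _)
            hS.measurableSet hη
      _ = _ := by rw [empirical, integral_inv_smul_sum_dirac, one_div]
  obtain ⟨ζ, hζ⟩ := exists_le_mul_measureReal_sub_wassersteinDist_empirical hN ξ hS hne hη.le
  have : IsProbabilityMeasure (empirical ζ) := isProbabilityMeasure_inv_smul_sum_dirac hN ζ
  refine ⟨⟨empirical ζ, inferInstance, integrable_inv_smul_sum_dirac hN ζ _, ?_⟩, ?_⟩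
  · refine (le_antisymm (hub (empirical ζ) this (integrable_inv_smul_sum_dirac hN ζ _)) ?_).symm
    rw [div_le_iff₀ hη, one_div]
    have : ((empirical ζ).real S - 1 / η * wassersteinDist (empirical ζ) (empirical ξ)) * η
        = η * (empirical ζ).real S - wassersteinDist (empirical ζ) (empirical ξ) := by
      field_simp
    exact hζ.trans this.ge
  · rintro _ ⟨μ, hμ, hμ_int, rfl⟩
    exact hub μ hμ hμ_int

end RelaxedChanceConstraint

theorem relaxed_drcc_iff_distance_form_general {n m N : ℕ} (hN : 0 < N)
    (P : Matrix (Fin n) (Fin n) ℝ)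
    (V : Matrix (Fin n) (Fin m) ℝ) (f : Fin m → ℝ)
    (ξhat : Fin N → EuclideanSpace ℝ (Fin n))
    (η : ℝ) (hη : 0 < η) (β : ℝ) :
    (sSup { r : ℝ | ∃ μ : Measure (EuclideanSpace ℝ (Fin n)),
        IsProbabilityMeasure μ ∧ Integrable (fun ξ => ‖ξ‖) μ ∧
        r = (μ { ξ : EuclideanSpace ℝ (Fin n) |
              (toVec ξ + V.mulVec f) ⬝ᵥ P.mulVec (toVec ξ + V.mulVec f) ≤ 1 }).toReal
            - (1 / η) * wassersteinDist μ (empirical ξhat) } ≤ 1 - β)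
      ↔ (1 / N : ℝ) * ∑ i : Fin N,
          max (η - infDist (ξhat i) { ξ : EuclideanSpace ℝ (Fin n) |
            (toVec ξ + V.mulVec f) ⬝ᵥ P.mulVec (toVec ξ + V.mulVec f) ≤ 1 }) 0
          ≤ (1 - β) * η := by
  rw [(isGreatest_measureReal_sub_wassersteinDist_empirical hN ξhat
    (isClosed_setOf_dotProduct_mulVec_le P _ 1)
    (nonempty_setOf_dotProduct_mulVec_le P _ zero_le_one) hη).csSup_eq, div_le_iff₀ hη]

/-- Distance-space form of the fault-detection-rate constraint (part of Theorem 1 of the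
paper): with `S = {ξ : (ξ + V f̄)ᵀ P̄ (ξ + V f̄) ≤ 1}`, the relaxed distributionally robust
chance constraint holds iff `(1/N) ∑ᵢ max(η - infDist(ξ̂ᵢ, S), 0) ≤ (1 - β) η`. -/
theorem relaxed_drcc_iff_distance_form {n m N : ℕ} (hN : 0 < N)
    (P : Matrix (Fin n) (Fin n) ℝ) (hP : P.PosSemidef)
    (V : Matrix (Fin n) (Fin m) ℝ) (f : Fin m → ℝ)
    (ξhat : Fin N → EuclideanSpace ℝ (Fin n))
    (η : ℝ) (hη : 0 < η) (β : ℝ) (hβ : β ∈ Set.Ioo (0 : ℝ) 1) :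
    (sSup { r : ℝ | ∃ μ : Measure (EuclideanSpace ℝ (Fin n)),
        IsProbabilityMeasure μ ∧ Integrable (fun ξ => ‖ξ‖) μ ∧
        r = (μ { ξ : EuclideanSpace ℝ (Fin n) |
              (toVec ξ + V.mulVec f) ⬝ᵥ P.mulVec (toVec ξ + V.mulVec f) ≤ 1 }).toReal
            - (1 / η) * wassersteinDist μ (empirical ξhat) } ≤ 1 - β)
      ↔ (1 / N : ℝ) * ∑ i : Fin N,
          max (η - infDist (ξhat i) { ξ : EuclideanSpace ℝ (Fin n) |
            (toVec ξ + V.mulVec f) ⬝ᵥ P.mulVec (toVec ξ + V.mulVec f) ≤ 1 }) 0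
          ≤ (1 - β) * η :=
  relaxed_drcc_iff_distance_form_general hN P V f ξhat η hη β
end

section
/- Let P̄ be an n×n real positive semidefinite matrix, V an n×m real matrix, f̄ ∈ ℝ^m, ξ̂ ∈ ℝ^n, and let S = {ξ ∈ ℝ^n : (ξ+Vf̄)ᵀ P̄ (ξ+Vf̄) ≤ 1}. Let Ξ = {ξ ∈ ℝ^n : (ξ−c_j)ᵀ Ω_j (ξ−c_j) ≤ 1 for all j = 1,…,N_j} where each Ω_j is an n×n real positive definite matrix and c_j ∈ ℝ^n. Suppose π ≥ 0, ω_1,…,ω_{N_j} ≥ 0, and p, u ∈ ℝ satisfy: (i) the (n+1)×(n+1) block matrix [[I, −ξ̂],[−ξ̂ᵀ, ξ̂ᵀξ̂ − p]] + ∑_{j=1}^{N_j} ω_j·[[Ω_j, −Ω_j c_j],[c_jᵀΩ_j, c_jᵀΩ_j c_j − 1]] + π·[[P̄, P̄Vf̄],[f̄ᵀVᵀP̄, f̄ᵀVᵀP̄Vf̄ − 1]] is positive semidefinite, and (ii) the 2×2 matrix [[p, u],[u, 1]] is positive semidefinite. Then for every ξ ∈ S ∩ Ξ, one has u ≤ ‖ξ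 − ξ̂‖; in particular, if S ∩ Ξ is nonempty, then u ≤ inf_{ξ ∈ S ∩ Ξ} ‖ξ − ξ̂‖. -/
/-!
Evaluating the quadratic form of the certificate matrix in `h1` at the homogenized point
`(ξ, 1)` gives `‖ξ - ξ̂‖² - p + ∑ ωⱼ (gⱼ ξ - 1) + π (g ξ - 1) ≥ 0`, where `gⱼ` and `g` are the
quadratic functions describing `Ξ` and `S`. On `S ∩ Ξ` the multiplier terms are nonpositive, so
`p ≤ ‖ξ - ξ̂‖²`, while positive semidefiniteness of `[[p, u], [u, 1]]` gives `u² ≤ p`.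
-/

open Matrix Metric

/-- The symmetric homogenization `[[A, b],[bᵀ, c]]` of a quadratic function. -/
def homMat {n : ℕ} (A : Matrix (Fin n) (Fin n) ℝ) (b : Fin n → ℝ) (c : ℝ) :
    Matrix (Fin n ⊕ Fin 1) (Fin n ⊕ Fin 1) ℝ :=
  Matrix.fromBlocks A (Matrix.replicateCol (Fin 1) b) (Matrix.replicateRow (Fin 1) b) (Matrix.of fun _ _ => c)

section QuadraticForm

variable {k : Type*} [Fintype k]

lemma Matrix.IsSymm.dotProduct_mulVec_comm {R : Type*} [CommRing R] {A : Matrix k k R}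
    (hA : A.IsSymm) (x y : k → R) : x ⬝ᵥ A *ᵥ y = y ⬝ᵥ A *ᵥ x := by
  rw [dotProduct_mulVec, ← mulVec_transpose, hA.eq, dotProduct_comm]

lemma Matrix.IsSymm.sub_dotProduct_mulVec_sub {R : Type*} [CommRing R] {A : Matrix k k R}
    (hA : A.IsSymm) (x c : k → R) :
    (x - c) ⬝ᵥ A *ᵥ (x - c) = x ⬝ᵥ A *ᵥ x - 2 * ((A *ᵥ c) ⬝ᵥ x) + c ⬝ᵥ A *ᵥ c := by
  simp only [mulVec_sub, dotProduct_sub, sub_dotProduct]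
  rw [hA.dotProduct_mulVec_comm c x, dotProduct_comm (A *ᵥ c) x]
  ring

/-- The easy direction of the S-lemma. -/
lemma Matrix.PosSemidef.dotProduct_mulVec_nonneg_of_add_sum_smul {ι : Type*} [Fintype ι]
    {M₀ M' : Matrix k k ℝ} {M : ι → Matrix k k ℝ} {w : ι → ℝ} {t : ℝ}
    (h : (M₀ + ∑ i, w i • M i + t • M').PosSemidef) (hw : ∀ i, 0 ≤ w i) (ht : 0 ≤ t)
    (z : k → ℝ) (hz : ∀ i, z ⬝ᵥ M i *ᵥ z ≤ 0) (hz' : z ⬝ᵥ M' *ᵥ z ≤ 0) :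
    0 ≤ z ⬝ᵥ M₀ *ᵥ z := by
  have hcert := h.dotProduct_mulVec_nonneg z
  simp only [star_trivial, add_mulVec, sum_mulVec, smul_mulVec, dotProduct_add, dotProduct_sum,
    dotProduct_smul, smul_eq_mul] at hcert
  have hsum : ∑ i, w i * (z ⬝ᵥ M i *ᵥ z) ≤ 0 :=
    Finset.sum_nonpos fun i _ => mul_nonpos_of_nonneg_of_nonpos (hw i) (hz i)
  nlinarith [mul_nonpos_of_nonneg_of_nonpos ht hz']

end QuadraticForm

lemma Matrix.PosSemidef.sq_le_mul_of_fin_two {a b c : ℝ} (h : !![a, b; b, c].PosSemidef) :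
    b ^ 2 ≤ a * c := by
  have hdet := h.det_nonneg
  rw [det_fin_two_of] at hdet
  nlinarith

lemma homMat_dotProduct_mulVec {n : ℕ} (A : Matrix (Fin n) (Fin n) ℝ) (b : Fin n → ℝ) (c : ℝ)
    (x : Fin n → ℝ) :
    Sum.elim x 1 ⬝ᵥ homMat A b c *ᵥ Sum.elim x 1 = x ⬝ᵥ A *ᵥ x + 2 * (b ⬝ᵥ x) + c := by
  simp only [homMat, fromBlocks_mulVec, sumElim_dotProduct_sumElim, dotProduct_add,
    Sum.elim_comp_inl, Sum.elim_comp_inr]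
  simp [mulVec, dotProduct, mul_comm (x _) (b _)]
  ring

lemma homMat_dotProduct_mulVec_sub {n : ℕ} {A : Matrix (Fin n) (Fin n) ℝ} (hA : A.IsSymm)
    (x c : Fin n → ℝ) (r : ℝ) :
    Sum.elim x 1 ⬝ᵥ homMat A (-(A *ᵥ c)) (c ⬝ᵥ A *ᵥ c - r) *ᵥ Sum.elim x 1
      = (x - c) ⬝ᵥ A *ᵥ (x - c) - r := by
  rw [homMat_dotProduct_mulVec, hA.sub_dotProduct_mulVec_sub, neg_dotProduct]
  ring

lemma homMat_dotProduct_mulVec_add {n : ℕ} {A : Matrix (Fin n) (Fin n) ℝ} (hA : A.IsSymm)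
    (x d : Fin n → ℝ) (r : ℝ) :
    Sum.elim x 1 ⬝ᵥ homMat A (A *ᵥ d) (d ⬝ᵥ A *ᵥ d - r) *ᵥ Sum.elim x 1
      = (x + d) ⬝ᵥ A *ᵥ (x + d) - r := by
  simpa only [mulVec_neg, neg_neg, neg_dotProduct, dotProduct_neg, sub_neg_eq_add]
    using homMat_dotProduct_mulVec_sub hA x (-d) r

lemma toVec_sub {n : ℕ} (ξ η : EuclideanSpace ℝ (Fin n)) : toVec (ξ - η) = toVec ξ - toVec η :=
  rfl

lemma dotProduct_toVec_self {n : ℕ} (ξ : EuclideanSpace ℝ (Fin n)) :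
    toVec ξ ⬝ᵥ toVec ξ = ‖ξ‖ ^ 2 := by
  rw [← real_inner_self_eq_norm_sq, EuclideanSpace.inner_eq_star_dotProduct, star_trivial]
  rfl

/-- Bounded-support extension (equation (18) in Remark 4 of the paper): with the
ellipsoidal-intersection support set `Ξ = {ξ : (ξ - cⱼ)ᵀ Ωⱼ (ξ - cⱼ) ≤ 1, ∀j}`, any feasible
point `(π, ω, p, u)` of the augmented SDP yields `u ≤ ‖ξ - ξ̂‖` for all `ξ ∈ S ∩ Ξ`; in
particular `u` is a lower bound on `inf_{ξ ∈ S ∩ Ξ} ‖ξ - ξ̂‖` whenever `S ∩ Ξ ≠ ∅`. -/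
theorem bounded_support_sdp_lower_bound {n m Nj : ℕ}
    (P : Matrix (Fin n) (Fin n) ℝ) (hP : P.PosSemidef)
    (V : Matrix (Fin n) (Fin m) ℝ) (f : Fin m → ℝ) (ξhat : EuclideanSpace ℝ (Fin n))
    (Ω : Fin Nj → Matrix (Fin n) (Fin n) ℝ) (hΩ : ∀ j, (Ω j).PosDef)
    (cc : Fin Nj → Fin n → ℝ)
    (π : ℝ) (hπ : 0 ≤ π) (ω : Fin Nj → ℝ) (hω : ∀ j, 0 ≤ ω j) (p u : ℝ)
    (h1 : (homMat (1 : Matrix (Fin n) (Fin n) ℝ) (-(toVec ξhat))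
            (toVec ξhat ⬝ᵥ toVec ξhat - p)
          + ∑ j : Fin Nj, ω j • homMat (Ω j) (-((Ω j).mulVec (cc j)))
              ((cc j) ⬝ᵥ (Ω j).mulVec (cc j) - 1)
          + π • homMat P (P.mulVec (V.mulVec f))
              ((V.mulVec f) ⬝ᵥ P.mulVec (V.mulVec f) - 1)).PosSemidef)
    (h2 : (!![p, u; u, 1]).PosSemidef) :
    (∀ ξ : EuclideanSpace ℝ (Fin n),
      (toVec ξ + V.mulVec f) ⬝ᵥ P.mulVec (toVec ξ + V.mulVec f) ≤ 1 →
      (∀ j : Fin Nj, (toVec ξ - cc j) ⬝ᵥ (Ω j).mulVec (toVec ξ - cc j) ≤ 1) →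
        u ≤ ‖ξ - ξhat‖) ∧
    (({ ξ : EuclideanSpace ℝ (Fin n) |
          (toVec ξ + V.mulVec f) ⬝ᵥ P.mulVec (toVec ξ + V.mulVec f) ≤ 1 } ∩
        { ξ : EuclideanSpace ℝ (Fin n) |
          ∀ j : Fin Nj, (toVec ξ - cc j) ⬝ᵥ (Ω j).mulVec (toVec ξ - cc j) ≤ 1 }).Nonempty →
      u ≤ infDist ξhat
        ({ ξ : EuclideanSpace ℝ (Fin n) |
            (toVec ξ + V.mulVec f) ⬝ᵥ P.mulVec (toVec ξ + V.mulVec f) ≤ 1 } ∩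
          { ξ : EuclideanSpace ℝ (Fin n) |
            ∀ j : Fin Nj, (toVec ξ - cc j) ⬝ᵥ (Ω j).mulVec (toVec ξ - cc j) ≤ 1 })) := by
  have hu : u ^ 2 ≤ p := by simpa using h2.sq_le_mul_of_fin_two
  have main : ∀ ξ : EuclideanSpace ℝ (Fin n),
      (toVec ξ + V.mulVec f) ⬝ᵥ P.mulVec (toVec ξ + V.mulVec f) ≤ 1 →
      (∀ j : Fin Nj, (toVec ξ - cc j) ⬝ᵥ (Ω j).mulVec (toVec ξ - cc j) ≤ 1) →
        u ≤ ‖ξ - ξhat‖ := by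
    intro ξ hS hΞ
    have hΞ' (j : Fin Nj) := homMat_dotProduct_mulVec_sub
      (isHermitian_iff_isSymm.mp (hΩ j).isHermitian) (toVec ξ) (cc j) 1
    have hS' := homMat_dotProduct_mulVec_add
      (isHermitian_iff_isSymm.mp hP.isHermitian) (toVec ξ) (V *ᵥ f) 1
    have hball := homMat_dotProduct_mulVec_sub isSymm_one (toVec ξ) (toVec ξhat) p
    simp only [one_mulVec] at hball
    have hcert := h1.dotProduct_mulVec_nonneg_of_add_sum_smul hω hπ (Sum.elim (toVec ξ) 1)
      (fun j => by linarith [hΞ' j, hΞ j]) (by linarith)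
    rw [hball, ← toVec_sub, dotProduct_toVec_self] at hcert
    exact (abs_le_of_sq_le_sq' (by linarith) (norm_nonneg _)).2
  refine ⟨main, fun hne => (le_infDist hne).2 fun ξ hξ => ?_⟩
  rw [dist_comm, dist_eq_norm]
  exact main ξ hξ.1 hξ.2
end
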